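/- arXiv:1204.2540 — 2 statements merged into one kernel-verified Lean document; each statement's English description precedes it below -/
import Mathlib

section
/- Let φ = (1+√5)/2 and let m > 2 be an integer. If (i₁,…,i_k) is a strictly increasing tuple of integers with k ≥ 1, 2 ≤ i₁ ≤ m − 1, and i_{j+1} ≥ i_j + 2 for all j, and n = F_{i₁} + ⋯ + F_{i_k}, then ‖n·φ‖ > φ^{−m}. -/
/-- The golden mean φ = (1 + √5)/2. -/
noncomputable def phi : ℝ := (1 + Real.sqrt 5) / 2

/-- The distance from a real number to the nearest integer. -/
noncomputable def distNearestInt (x : ℝ) : ℝ := |x - round x|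

lemma phi_eq_gold : phi = Real.goldenRatio := rfl

lemma phi_gt_one : 1 < phi := phi_eq_gold ▸ Real.one_lt_goldenRatio

lemma phi_pos : 0 < phi := lt_trans one_pos phi_gt_one

/-- `x = 1/φ`. -/
noncomputable def xg : ℝ := phi⁻¹

lemma xg_pos : 0 < xg := inv_pos.mpr phi_pos

lemma xg_lt_one : xg < 1 := by
  rw [xg]
  exact inv_lt_one_of_one_lt₀ phi_gt_one

lemma xg_id : xg + xg ^ 2 = 1 := by
  have h : Real.goldenRatio ^ 2 = Real.goldenRatio + 1 := Real.goldenRatio_sq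
  have hp : (0:ℝ) < phi := phi_pos
  rw [xg]
  field_simp
  rw [phi_eq_gold] at *
  nlinarith [h]

lemma fib_mul_phi (i : ℕ) :
    (Nat.fib i : ℝ) * phi = (Nat.fib (i+1) : ℝ) - (-xg) ^ i := by
  induction i using Nat.twoStepInduction with
  | zero => simp
  | one =>
      have : (1:ℝ) + xg = phi := by
        have hxphi : xg * phi = 1 := inv_mul_cancel₀ (ne_of_gt phi_pos)
        have hme : (1 + xg) * xg = phi * xg := by nlinarith [xg_id]
        exact mul_right_cancel₀ (ne_of_gt xg_pos) hme
      simp [Nat.fib_one, Nat.fib_two]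
      linarith [this]
  | more i ih1 ih2 =>
      have hfib : (Nat.fib (i+2) : ℝ) = Nat.fib (i+1) + Nat.fib i := by
        rw [Nat.fib_add_two]; push_cast; ring
      have hfib3 : (Nat.fib (i+3) : ℝ) = Nat.fib (i+2) + Nat.fib (i+1) := by
        have : i + 3 = (i+1) + 2 := by ring
        rw [this, Nat.fib_add_two]; push_cast; ring
      have hx : (-xg) ^ (i+2) = (-xg) ^ i + (-xg) ^ (i+1) := by
        have h1 : (-xg) ^ (i+2) = (-xg) ^ i * xg ^ 2 := by ring
        have h2 : (-xg) ^ (i+1) = (-xg) ^ i * (-xg) := by ring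
        have hxx : xg ^ 2 = 1 - xg := by linarith [xg_id]
        rw [h1, h2, hxx]
        ring
      rw [hfib, hfib3, add_mul, ih1, ih2, hx]
      ring

lemma sum_fib_mul_phi (l : List ℕ) :
    ((l.map Nat.fib).sum : ℝ) * phi
      = ((l.map (fun i => Nat.fib (i+1))).sum : ℝ)
        - (l.map fun i => (-xg) ^ i).sum := by
  induction l with
  | nil => simp
  | cons a t ih =>
      simp only [List.map_cons, List.sum_cons]
      push_cast
      push_cast at ih
      rw [add_mul, fib_mul_phi, ih]
      ring

lemma key : ∀ l : List ℕ, l ≠ [] → l.Chain' (fun a b => a + 2 ≤ b) →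
    xg ^ (l.headI + 1) < (-1:ℝ) ^ (l.headI) * (l.map fun i => (-xg) ^ i).sum ∧
    (-1:ℝ) ^ (l.headI) * (l.map fun i => (-xg) ^ i).sum
      < xg ^ (l.headI) + xg ^ (l.headI + 1) := by
  intro l
  induction l with
  | nil => intro h; exact absurd rfl h
  | cons i t ih =>
      intro _ hchain
      have hx0 : (0:ℝ) < xg := xg_pos
      have hx1 : xg < 1 := xg_lt_one
      have hpow : ∀ a : ℕ, (-1:ℝ) ^ a * (-xg) ^ a = xg ^ a := by
        intro a
        rw [← mul_pow]
        norm_num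
      cases t with
      | nil =>
          simp only [List.headI, List.map_cons, List.map_nil, List.sum_cons,
            List.sum_nil, add_zero]
          rw [hpow i]
          constructor
          · have : xg ^ (i+1) = xg ^ i * xg := by ring
            rw [this]
            nlinarith [pow_pos hx0 i]
          · nlinarith [pow_pos hx0 (i+1)]
      | cons i' t' =>
          have hchain' : (i' :: t').Chain' (fun a b => a + 2 ≤ b) :=
            hchain.tail
          have hle : i + 2 ≤ i' := by
            have := List.isChain_cons_cons.mp hchain
            exact this.1
          obtain ⟨h1, h2⟩ := ih (by simp) hchain'
          simp only [List.headI] at h1 h2 ⊢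
          set S : ℝ := ((i' :: t').map fun j => (-xg) ^ j).sum with hSdef
          have hsplit : ((i :: i' :: t').map fun j => (-xg) ^ j).sum
              = (-xg) ^ i + S := by
            simp [hSdef]
          rw [hsplit, mul_add, hpow i]
          -- ε := (-1)^i' * S, with x^{i'+1} < ε < x^{i'} + x^{i'+1}
          have hsign : (-1:ℝ) ^ i * S = (-1:ℝ)^(i + i') * ((-1:ℝ)^i' * S) := by
            rw [pow_add]
            have : (-1:ℝ)^i' * (-1:ℝ)^i' = 1 := by
              rw [← pow_add, ← two_mul]
              exact Even.neg_one_pow ⟨i', (two_mul i').symm ▸ rfl⟩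
            calc (-1:ℝ) ^ i * S = ((-1:ℝ)^i * ((-1:ℝ)^i' * (-1:ℝ)^i')) * S := by
                  rw [this]; ring
              _ = (-1:ℝ)^i * (-1:ℝ)^i' * ((-1:ℝ)^i' * S) := by ring
          have hmono : ∀ a b : ℕ, a ≤ b → xg ^ b ≤ xg ^ a := fun a b h =>
            pow_le_pow_of_le_one hx0.le hx1.le h
          rcases Nat.even_or_odd (i + i') with hpar | hpar
          · -- same parity: (-1)^{i+i'} = 1, ε > 0
            rw [hsign, hpar.neg_one_pow, one_mul]
            constructor
            · have : (0:ℝ) < (-1:ℝ)^i' * S :=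
                lt_trans (pow_pos hx0 (i'+1)) h1
              have hlt : xg ^ (i+1) < xg ^ i := by
                have : xg ^ (i+1) = xg ^ i * xg := by ring
                nlinarith [pow_pos hx0 i]
              linarith
            · -- x^i + ε < x^i + x^{i'} + x^{i'+1} ≤ x^i + x^{i+2} + x^{i+3} = x^i + x^{i+1}
              have hb1 : xg ^ i' ≤ xg ^ (i+2) := hmono _ _ hle
              have hb2 : xg ^ (i'+1) ≤ xg ^ (i+3) := hmono _ _ (by omega)
              have hid : xg ^ (i+2) + xg ^ (i+3) = xg ^ (i+1) := by
                have := xg_id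
                have h3 : xg ^ (i+2) = xg ^ (i+1) * xg := by ring
                have h4 : xg ^ (i+3) = xg ^ (i+1) * xg ^ 2 := by ring
                rw [h3, h4, ← mul_add, this, mul_one]
              linarith
          · -- opposite parity: (-1)^{i+i'} = -1, and i' ≥ i + 3
            have hle3 : i + 3 ≤ i' := by
              obtain ⟨k, hk⟩ := hpar
              omega
            rw [hsign, hpar.neg_one_pow, neg_one_mul]
            constructor
            · -- x^i - ε > x^i - (x^{i'} + x^{i'+1}) ≥ x^i - x^{i+2} = x^{i+1}
              have hb1 : xg ^ i' ≤ xg ^ (i+3) := hmono _ _ hle3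
              have hb2 : xg ^ (i'+1) ≤ xg ^ (i+4) := hmono _ _ (by omega)
              have hid : xg ^ (i+3) + xg ^ (i+4) = xg ^ (i+2) := by
                have := xg_id
                have h3 : xg ^ (i+3) = xg ^ (i+2) * xg := by ring
                have h4 : xg ^ (i+4) = xg ^ (i+2) * xg ^ 2 := by ring
                rw [h3, h4, ← mul_add, this, mul_one]
              have hid2 : xg ^ (i+1) + xg ^ (i+2) = xg ^ i := by
                have := xg_id
                have h3 : xg ^ (i+1) = xg ^ i * xg := by ring
                have h4 : xg ^ (i+2) = xg ^ i * xg ^ 2 := by ring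
                rw [h3, h4, ← mul_add, this, mul_one]
              linarith
            · have : (0:ℝ) < (-1:ℝ)^i' * S :=
                lt_trans (pow_pos hx0 (i'+1)) h1
              nlinarith [pow_pos hx0 (i+1)]

/-- Let `m > 2`.  If `(i₁, …, i_k)` is a strictly increasing tuple of integers with `k ≥ 1`,
`2 ≤ i₁ ≤ m − 1`, consecutive entries differing by at least 2, and `n = F i₁ + ⋯ + F i_k`,
then `‖n·φ‖ > φ^(−m)`. -/
theorem dist_gt_of_head_le (m : ℕ) (hm : 2 < m) (l : List ℕ) (hne : l ≠ [])
    (hhead₁ : 2 ≤ l.headI) (hhead₂ : l.headI ≤ m - 1)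
    (hchain : l.Chain' (fun a b => a + 2 ≤ b))
    (n : ℕ) (hn : n = (l.map Nat.fib).sum) :
    phi ^ (-(m : ℤ)) < distNearestInt ((n : ℝ) * phi) := by
  have hx0 : (0:ℝ) < xg := xg_pos
  have hx1 : xg < 1 := xg_lt_one
  have hmono : ∀ a b : ℕ, a ≤ b → xg ^ b ≤ xg ^ a := fun a b h =>
    pow_le_pow_of_le_one hx0.le hx1.le h
  set i := l.headI with hi
  set S : ℝ := (l.map fun j => (-xg) ^ j).sum with hSdef
  obtain ⟨h1, h2⟩ := key l hne hchain
  rw [← hSdef, ← hi] at h1 h2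
  -- |S| bounds
  have habs : |S| = (-1:ℝ) ^ i * S := by
    rcases Nat.even_or_odd i with hp | hp
    · rw [hp.neg_one_pow, one_mul, abs_of_pos]
      rw [hp.neg_one_pow, one_mul] at h1
      exact lt_trans (pow_pos hx0 (i+1)) h1
    · rw [hp.neg_one_pow, neg_one_mul, abs_of_neg]
      rw [hp.neg_one_pow, neg_one_mul] at h1
      have := lt_trans (pow_pos hx0 (i+1)) h1
      linarith
  have hSlb : xg ^ (i+1) < |S| := habs ▸ h1
  have hSub : |S| < xg := by
    rw [habs]
    have hb1 : xg ^ i ≤ xg ^ 2 := hmono _ _ hhead₁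
    have hb2 : xg ^ (i+1) ≤ xg ^ 3 := hmono _ _ (by omega)
    have hid : xg ^ 2 + xg ^ 3 = xg := by
      have := xg_id
      nlinarith
    linarith
  -- phi^(-m) = xg^m
  have hzpow : phi ^ (-(m : ℤ)) = xg ^ m := by
    rw [zpow_neg, zpow_natCast, ← inv_pow, xg]
  -- n·φ = N - S
  set N : ℕ := (l.map (fun j => Nat.fib (j+1))).sum with hN
  have hmain : (n : ℝ) * phi = (N : ℝ) - S := by
    rw [hn, hN, hSdef]
    exact sum_fib_mul_phi l
  rw [hzpow, distNearestInt, hmain]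
  set r : ℤ := round ((N : ℝ) - S) with hr
  by_cases hrN : r = (N : ℤ)
  · rw [hrN]
    push_cast
    have : (N : ℝ) - S - (N : ℝ) = -S := by ring
    rw [this, abs_neg]
    calc xg ^ m ≤ xg ^ (i+1) := hmono _ _ (by omega)
      _ < |S| := hSlb
  · have hge : (1:ℝ) ≤ |(N : ℝ) - (r : ℝ)| := by
      have : ((N : ℤ) : ℝ) - (r : ℝ) = (((N : ℤ) - r : ℤ) : ℝ) := by push_cast; ring
      rw [show (N:ℝ) = ((N:ℤ):ℝ) by push_cast; ring, this, ← Int.cast_abs]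
      exact_mod_cast Int.one_le_abs (sub_ne_zero.mpr (fun h => hrN h.symm))
    have h1S : 1 - |S| ≤ |(N : ℝ) - S - r| := by
      have := abs_sub_abs_le_abs_sub ((N:ℝ) - (r:ℝ)) S
      have heq : (N:ℝ) - (r:ℝ) - S = (N:ℝ) - S - r := by ring
      rw [heq] at this
      linarith
    have hx2 : xg ^ 2 = 1 - xg := by nlinarith [xg_id]
    have hxm : xg ^ m ≤ xg ^ 3 := hmono _ _ (by omega)
    have hx32 : xg ^ 3 < xg ^ 2 := by nlinarith [pow_pos hx0 2]
    calc xg ^ m ≤ xg ^ 3 := hxm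
      _ < xg ^ 2 := hx32
      _ = 1 - xg := hx2
      _ < 1 - |S| := by linarith
      _ ≤ |(N : ℝ) - S - r| := h1S
end

section
/- Let φ = (1+√5)/2 and let m > 2 be an integer. If (i₁,…,i_k) is a strictly increasing tuple of integers with k ≥ 2, i₁ = m, i_{j+1} ≥ i_j + 2 for all j, and i₂ − m is even, and n = F_{i₁} + ⋯ + F_{i_k}, then ‖n·φ‖ > φ^{−m}. -/
open Real

lemma phi_eq : phi = goldenRatio := rfl

lemma goldConj_eq : goldenConj = -goldenRatio⁻¹ := by
  rw [inv_goldenRatio]; ring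

lemma psi_pow (i : ℕ) : goldenConj ^ i = (-1 : ℝ) ^ i * goldenRatio ^ (-(i : ℤ)) := by
  rw [goldConj_eq, show -goldenRatio⁻¹ = (-1) * goldenRatio⁻¹ by ring, mul_pow, inv_pow,
    ← zpow_natCast goldenRatio, ← zpow_neg]

lemma abs_psi_pow (i : ℕ) : |goldenConj ^ i| = goldenRatio ^ (-(i : ℤ)) := by
  rw [abs_pow, abs_of_neg goldenConj_neg, ← inv_goldenRatio, inv_pow, ← zpow_natCast goldenRatio,
    ← zpow_neg]

lemma fibsum (l : List ℕ) : ((l.map Nat.fib).sum : ℝ) * goldenRatio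
    = ((l.map (fun i => Nat.fib (i + 1))).sum : ℝ)
      - (l.map (fun i => goldenConj ^ i)).sum := by
  induction l with
  | nil => simp
  | cons a t ih =>
    simp only [List.map_cons, List.sum_cons]
    push_cast at ih ⊢
    have h := fib_succ_sub_goldenRatio_mul_fib a
    nlinarith [h, ih]

lemma one_add_inv_gold : 1 + goldenRatio⁻¹ = goldenRatio := by
  have hpos := goldenRatio_pos
  have h5 : Real.sqrt 5 ^ 2 = 5 := Real.sq_sqrt (by norm_num)
  field_simp
  nlinarith [h5]

lemma sum_zpow_bound (t : List ℕ) (hchain : t.Chain' (fun a b => a + 2 ≤ b)) :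
    ∀ c : ℕ, (∀ x ∈ t.head?, c ≤ x) →
    (t.map (fun i : ℕ => goldenRatio ^ (-(i : ℤ)))).sum ≤ goldenRatio ^ (1 - (c : ℤ)) := by
  induction t with
  | nil =>
    intro c _
    simp only [List.map_nil, List.sum_nil]
    positivity
  | cons x t ih =>
    intro c hhead
    have hcx : c ≤ x := hhead x rfl
    obtain ⟨h1, h2⟩ := List.isChain_cons.mp hchain
    have hrec := ih h2 (x + 2) h1
    simp only [List.map_cons, List.sum_cons]
    have hx : goldenRatio ^ (-(x : ℤ)) ≤ goldenRatio ^ (-(c : ℤ)) :=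
      zpow_le_zpow_right₀ one_lt_goldenRatio.le (by omega)
    have h3 : goldenRatio ^ (1 - ((x + 2 : ℕ) : ℤ)) ≤ goldenRatio ^ (1 - ((c : ℤ) + 2)) :=
      zpow_le_zpow_right₀ one_lt_goldenRatio.le (by omega)
    have h4 : goldenRatio ^ (-(c : ℤ)) + goldenRatio ^ (1 - ((c : ℤ) + 2))
        = goldenRatio ^ (1 - (c : ℤ)) := by
      have e1 : (1 - ((c : ℤ) + 2)) = -(c : ℤ) + (-1) := by ring
      have e2 : (1 - (c : ℤ)) = -(c : ℤ) + 1 := by ring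
      rw [e1, e2, zpow_add₀ goldenRatio_ne_zero, zpow_add₀ goldenRatio_ne_zero, zpow_one,
        zpow_neg_one]
      linear_combination (goldenRatio ^ (-(c : ℤ))) * one_add_inv_gold
    linarith

lemma abs_psi_sum (l : List ℕ) :
    |(l.map (fun i => goldenConj ^ i)).sum|
      ≤ (l.map (fun i : ℕ => goldenRatio ^ (-(i : ℤ)))).sum := by
  induction l with
  | nil => simp
  | cons a t ih =>
    simp only [List.map_cons, List.sum_cons]
    calc |goldenConj ^ a + (t.map (fun i => goldenConj ^ i)).sum|
        ≤ |goldenConj ^ a| + |(t.map (fun i => goldenConj ^ i)).sum| := abs_add_le _ _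
      _ ≤ _ := by rw [abs_psi_pow]; linarith

/-- Let `m > 2`.  If `(i₁, …, i_k)` is a strictly increasing tuple of integers with `k ≥ 2`,
`i₁ = m`, consecutive entries differing by at least 2, `i₂ − m` even, and
`n = F i₁ + ⋯ + F i_k`, then `‖n·φ‖ > φ^(−m)`. -/
theorem dist_gt_of_second_even (m : ℕ) (hm : 2 < m) (l : List ℕ) (hlen : 2 ≤ l.length)
    (hhead : l.headI = m) (hchain : l.Chain' (fun a b => a + 2 ≤ b))
    (heven : Even (l.tail.headI - m))
    (n : ℕ) (hn : n = (l.map Nat.fib).sum) :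
    phi ^ (-(m : ℤ)) < distNearestInt ((n : ℝ) * phi) := by
  match l, hlen with
  | a :: b :: t, _ =>
  simp only [List.headI] at hhead
  subst hhead
  simp only [List.tail_cons, List.headI] at heven
  obtain ⟨hab, hchain2⟩ := List.isChain_cons_cons.mp hchain
  obtain ⟨hbt, hchaint⟩ := List.isChain_cons.mp hchain2
  obtain ⟨k, hk⟩ := heven
  have hk' : b = a + 2 * k := by omega
  set Φ := goldenRatio with hΦ
  have hΦpos := goldenRatio_pos
  have hΦ1 := one_lt_goldenRatio
  set S : ℝ := ((a :: b :: t).map (fun i => goldenConj ^ i)).sum with hS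
  set Z : ℕ := ((a :: b :: t).map (fun i => Nat.fib (i + 1))).sum with hZ
  have hnφ : (n : ℝ) * phi = (Z : ℝ) - S := by
    rw [phi_eq, hn]
    have h := fibsum (a :: b :: t)
    rw [hZ, hS]
    push_cast at h ⊢
    linarith
  -- bound |S| from above
  have habs : |S| ≤ Φ ^ (1 - (a : ℤ)) := by
    have h2 := abs_psi_sum (a :: b :: t)
    have h3 := sum_zpow_bound (a :: b :: t) hchain a (fun x hx => by
      simp only [List.head?_cons, Option.mem_def, Option.some.injEq] at hx
      omega)
    rw [← hS] at h2
    linarith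
  have hsqrt5 : Real.sqrt 5 > 2 := by
    nlinarith [Real.sq_sqrt (by norm_num : (0:ℝ) ≤ 5), Real.sqrt_nonneg 5]
  have hΦ32 : Φ > 3 / 2 := by
    rw [hΦ]; unfold goldenRatio; linarith
  have hShalf : |S| < 1 / 2 := by
    have h1 : Φ ^ (1 - (a : ℤ)) ≤ Φ ^ (-2 : ℤ) :=
      zpow_le_zpow_right₀ hΦ1.le (by omega)
    have h2 : Φ ^ (-2 : ℤ) < 1 / 2 := by
      rw [show ((-2:ℤ)) = -((2:ℕ):ℤ) from rfl, zpow_neg, zpow_natCast]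
      rw [inv_lt_comm₀ (by positivity) (by norm_num)]
      nlinarith
    linarith
  -- compute the distance
  have hr0 : round (-S) = 0 := by
    rw [round_eq_zero_iff]
    obtain ⟨hl, hr⟩ := abs_lt.mp hShalf
    exact Set.mem_Ico.mpr ⟨by linarith, by linarith⟩
  have hround : round ((Z : ℝ) - S) = (Z : ℤ) := by
    rw [show ((Z : ℝ) - S) = ((Z : ℤ) : ℝ) + (-S) by push_cast; ring, round_intCast_add, hr0,
      add_zero]
  have hdist : distNearestInt ((n : ℝ) * phi) = |S| := by
    rw [distNearestInt, hnφ, hround]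
    rw [show ((Z:ℝ)) - S - ((Z:ℤ):ℝ) = -S by push_cast; ring, abs_neg]
  rw [hdist, phi_eq, ← hΦ]
  -- lower bound |S|
  set T : ℝ := (t.map (fun i => goldenConj ^ i)).sum with hT
  have hSsplit : S = (-1 : ℝ) ^ a * (Φ ^ (-(a : ℤ)) + Φ ^ (-(b : ℤ))) + T := by
    rw [hS]
    simp only [List.map_cons, List.sum_cons]
    rw [psi_pow a, psi_pow b, ← hΦ, hk']
    rw [show ((-1:ℝ)) ^ (a + 2 * k) = (-1) ^ a by
      rw [pow_add, pow_mul]; norm_num]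
    ring
  have hTabs : |T| ≤ Φ ^ (-(b : ℤ) - 1) := by
    have h2 := abs_psi_sum t
    have h3 := sum_zpow_bound t hchaint (b + 2) hbt
    have h4 : Φ ^ (1 - ((b + 2 : ℕ) : ℤ)) = Φ ^ (-(b : ℤ) - 1) := by
      congr 1; push_cast; ring
    rw [h4] at h3
    rw [← hT] at h2
    linarith
  have hA : (0:ℝ) < Φ ^ (-(a : ℤ)) + Φ ^ (-(b : ℤ)) := by positivity
  have hlow : Φ ^ (-(a : ℤ)) + Φ ^ (-(b : ℤ)) - |T| ≤ |S| := by
    have h2 : |(-1 : ℝ) ^ a * (Φ ^ (-(a : ℤ)) + Φ ^ (-(b : ℤ)))| ≤ |S| + |T| := by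
      calc |(-1 : ℝ) ^ a * (Φ ^ (-(a : ℤ)) + Φ ^ (-(b : ℤ)))|
          = |S + (-T)| := by rw [hSsplit]; ring_nf
        _ ≤ |S| + |(-T)| := abs_add_le _ _
        _ = |S| + |T| := by rw [abs_neg]
    rw [abs_mul, abs_pow, abs_neg, abs_one, one_pow, one_mul, abs_of_pos hA] at h2
    linarith
  have hfin : Φ ^ (-(b : ℤ) - 1) < Φ ^ (-(b : ℤ)) :=
    (zpow_lt_zpow_iff_right₀ hΦ1).mpr (by omega)
  linarith
end
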